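/- Cauchy–Bolzano criterion for the FHK Δ-integral: a function f : [a,b]_𝕋 → ℝ_F is FHK Δ-integrable on [a,b]_𝕋 if and only if for every ε > 0 there exists a Δ-gauge δ on [a,b]_𝕋 such that D(S(f, D₁, δ), S(f, D₂, δ)) < ε for all δ-fine HK divisions D₁, D₂ of [a,b]_𝕋. -/

import Mathlib

open Set Filter Topology MeasureTheory unitInterval

noncomputable section

/-- The forward jump operator `σ` of a time scale `T ⊆ ℝ`:
`σ(x) = inf {y ∈ T : y > x}`, with the convention `σ(x) = x`
when there is no point of `T` above `x` (so `σ(sup T) = sup T`). -/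
def tsSigma (T : Set ℝ) (x : ℝ) : ℝ :=
  haveI := Classical.propDecidable ({y | y ∈ T ∧ x < y}).Nonempty
  if ({y | y ∈ T ∧ x < y}).Nonempty then sInf {y | y ∈ T ∧ x < y} else x

/-- The graininess function `μ(x) = σ(x) − x`. -/
def tsGraininess (T : Set ℝ) (x : ℝ) : ℝ := tsSigma T x - x

/-- A subset `S` of the time scale `T` has Δ-measure zero: it has Lebesgue
measure zero and contains no right-scattered points. -/
def DeltaMeasureZero (T S : Set ℝ) : Prop :=
  S ⊆ T ∧ volume S = 0 ∧ ∀ x ∈ S, tsSigma T x = x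

/-- `(δL, δR)` is a Δ-gauge on `[a,b]_T`. -/
structure IsDeltaGauge (T : Set ℝ) (a b : ℝ) (δL δR : ℝ → ℝ) : Prop where
  nonneg_left : ∀ ξ ∈ T ∩ Icc a b, 0 ≤ δL ξ
  nonneg_right : ∀ ξ ∈ T ∩ Icc a b, 0 ≤ δR ξ
  pos_left : ∀ ξ ∈ T ∩ Ioc a b, 0 < δL ξ
  pos_right : ∀ ξ ∈ T ∩ Ico a b, 0 < δR ξ
  graininess_le : ∀ ξ ∈ T ∩ Ico a b, tsGraininess T ξ ≤ δR ξ

/-- A tagged (HK) division `{([x_{i-1}, x_i]_T, ξ_i)}_{i=1}^n` of `[a,b]_T`. -/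
structure TaggedDivision (T : Set ℝ) (a b : ℝ) where
  n : ℕ
  x : ℕ → ℝ
  tag : ℕ → ℝ
  x_zero : x 0 = a
  x_last : x n = b
  x_mem : ∀ i ≤ n, x i ∈ T
  x_lt : ∀ i < n, x i < x (i + 1)
  tag_mem : ∀ i < n, tag i ∈ T
  tag_left : ∀ i < n, x i ≤ tag i
  tag_right : ∀ i < n, tag i ≤ x (i + 1)

/-- A division is `δ`-fine when `[x_{i-1},x_i]_T ⊆ [ξ_i - δL ξ_i, ξ_i + δR ξ_i]`. -/
def TaggedDivision.IsFine {T : Set ℝ} {a b : ℝ} (D : TaggedDivision T a b)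
    (δL δR : ℝ → ℝ) : Prop :=
  ∀ i < D.n, D.tag i - δL (D.tag i) ≤ D.x i ∧ D.x (i + 1) ≤ D.tag i + δR (D.tag i)

/-- The Riemann sum of a real-valued function over a tagged division. -/
def realRiemannSum {T : Set ℝ} {a b : ℝ} (g : ℝ → ℝ) (D : TaggedDivision T a b) : ℝ :=
  ∑ i ∈ Finset.range D.n, g (D.tag i) * (D.x (i + 1) - D.x i)

/-- `g` is Henstock–Kurzweil Δ-integrable on `[a,b]_T` with integral `A`. -/
def HKIntegrableTo (T : Set ℝ) (a b : ℝ) (g : ℝ → ℝ) (A : ℝ) : Prop :=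
  ∀ ε > 0, ∃ δL δR : ℝ → ℝ, IsDeltaGauge T a b δL δR ∧
    ∀ D : TaggedDivision T a b, D.IsFine δL δR → |realRiemannSum g D - A| < ε

/-- A fuzzy number, represented (via the Goetschel–Voxman characterization) by the
endpoint functions `α ↦ u̲^α = lo α` and `α ↦ u̅^α = hi α` of its level sets
`[u]^α = [lo α, hi α]`, `α ∈ [0,1]`. -/
@[ext]
structure FuzzyNumber where
  lo : unitInterval → ℝ
  hi : unitInterval → ℝ
  lo_mono : Monotone lo
  hi_anti : Antitone hi
  lo_le_hi : ∀ α, lo α ≤ hi α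
  lo_leftCont : ∀ c : unitInterval, c ≠ 0 → Tendsto lo (𝓝[<] c) (𝓝 (lo c))
  hi_leftCont : ∀ c : unitInterval, c ≠ 0 → Tendsto hi (𝓝[<] c) (𝓝 (hi c))
  lo_rightCont : Tendsto lo (𝓝[>] (0 : unitInterval)) (𝓝 (lo 0))
  hi_rightCont : Tendsto hi (𝓝[>] (0 : unitInterval)) (𝓝 (hi 0))

namespace FuzzyNumber

/-- Level-wise addition of fuzzy numbers: `[u + v]^α = [u]^α + [v]^α`. -/
instance : Add FuzzyNumber :=
  ⟨fun u v =>
    { lo := fun α => u.lo α + v.lo α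
      hi := fun α => u.hi α + v.hi α
      lo_mono := fun _ _ h => add_le_add (u.lo_mono h) (v.lo_mono h)
      hi_anti := fun _ _ h => add_le_add (u.hi_anti h) (v.hi_anti h)
      lo_le_hi := fun α => add_le_add (u.lo_le_hi α) (v.lo_le_hi α)
      lo_leftCont := fun c hc => (u.lo_leftCont c hc).add (v.lo_leftCont c hc)
      hi_leftCont := fun c hc => (u.hi_leftCont c hc).add (v.hi_leftCont c hc)
      lo_rightCont := u.lo_rightCont.add v.lo_rightCont
      hi_rightCont := u.hi_rightCont.add v.hi_rightCont }⟩

instance : Zero FuzzyNumber :=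
  ⟨{ lo := fun _ => 0
     hi := fun _ => 0
     lo_mono := monotone_const
     hi_anti := antitone_const
     lo_le_hi := fun _ => le_refl 0
     lo_leftCont := fun _ _ => tendsto_const_nhds
     hi_leftCont := fun _ _ => tendsto_const_nhds
     lo_rightCont := tendsto_const_nhds
     hi_rightCont := tendsto_const_nhds }⟩

@[simp] lemma add_lo (u v : FuzzyNumber) (α : unitInterval) :
    (u + v).lo α = u.lo α + v.lo α := rfl
@[simp] lemma add_hi (u v : FuzzyNumber) (α : unitInterval) :
    (u + v).hi α = u.hi α + v.hi α := rfl
@[simp] lemma zero_lo (α : unitInterval) : (0 : FuzzyNumber).lo α = 0 := rfl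
@[simp] lemma zero_hi (α : unitInterval) : (0 : FuzzyNumber).hi α = 0 := rfl

instance : AddCommMonoid FuzzyNumber where
  add_assoc a b c := by
    refine FuzzyNumber.ext ?_ ?_ <;> funext α <;> simp [add_assoc]
  zero_add a := by
    refine FuzzyNumber.ext ?_ ?_ <;> funext α <;> simp
  add_zero a := by
    refine FuzzyNumber.ext ?_ ?_ <;> funext α <;> simp
  add_comm a b := by
    refine FuzzyNumber.ext ?_ ?_ <;> funext α <;> simp [add_comm]
  nsmul := nsmulRec

/-- Level-wise scalar multiplication of fuzzy numbers: `[λ ⊙ u]^α = λ [u]^α`. -/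
instance : SMul ℝ FuzzyNumber :=
  ⟨fun l u =>
    if hl : 0 ≤ l then
      { lo := fun α => l * u.lo α
        hi := fun α => l * u.hi α
        lo_mono := fun _ _ h => mul_le_mul_of_nonneg_left (u.lo_mono h) hl
        hi_anti := fun _ _ h => mul_le_mul_of_nonneg_left (u.hi_anti h) hl
        lo_le_hi := fun α => mul_le_mul_of_nonneg_left (u.lo_le_hi α) hl
        lo_leftCont := fun c hc => (u.lo_leftCont c hc).const_mul l
        hi_leftCont := fun c hc => (u.hi_leftCont c hc).const_mul l
        lo_rightCont := u.lo_rightCont.const_mul l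
        hi_rightCont := u.hi_rightCont.const_mul l }
    else
      { lo := fun α => l * u.hi α
        hi := fun α => l * u.lo α
        lo_mono := fun _ _ h => mul_le_mul_of_nonpos_left (u.hi_anti h) (le_of_lt (not_le.mp hl))
        hi_anti := fun _ _ h => mul_le_mul_of_nonpos_left (u.lo_mono h) (le_of_lt (not_le.mp hl))
        lo_le_hi := fun α => mul_le_mul_of_nonpos_left (u.lo_le_hi α) (le_of_lt (not_le.mp hl))
        lo_leftCont := fun c hc => (u.hi_leftCont c hc).const_mul l
        hi_leftCont := fun c hc => (u.lo_leftCont c hc).const_mul l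
        lo_rightCont := u.hi_rightCont.const_mul l
        hi_rightCont := u.lo_rightCont.const_mul l }⟩

/-- The partial order on fuzzy numbers: `u ≤ v` iff `u̲^α ≤ v̲^α` and
`u̅^α ≤ v̅^α` for all `α ∈ [0,1]`. -/
instance : LE FuzzyNumber :=
  ⟨fun u v => ∀ α : unitInterval, u.lo α ≤ v.lo α ∧ u.hi α ≤ v.hi α⟩

end FuzzyNumber

/-- The Hausdorff distance on fuzzy numbers:
`D(u,v) = sup_{α ∈ [0,1]} max {|u̲^α − v̲^α|, |u̅^α − v̅^α|}`. -/
def fuzzyDist (u v : FuzzyNumber) : ℝ :=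
  ⨆ α : unitInterval, max |u.lo α - v.lo α| |u.hi α - v.hi α|

/-- The Riemann sum `S(f, D, δ) = Σ f(ξ_i) ⊙ (x_i − x_{i-1})` of a fuzzy-valued
function over a tagged division. -/
def fuzzyRiemannSum {T : Set ℝ} {a b : ℝ} (f : ℝ → FuzzyNumber)
    (D : TaggedDivision T a b) : FuzzyNumber :=
  ∑ i ∈ Finset.range D.n, (D.x (i + 1) - D.x i) • f (D.tag i)

/-- `f` is fuzzy Henstock–Kurzweil Δ-integrable on `[a,b]_T` with integral `A`. -/
def FHKIntegrableTo (T : Set ℝ) (a b : ℝ) (f : ℝ → FuzzyNumber) (A : FuzzyNumber) : Prop :=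
  ∀ ε > 0, ∃ δL δR : ℝ → ℝ, IsDeltaGauge T a b δL δR ∧
    ∀ D : TaggedDivision T a b, D.IsFine δL δR → fuzzyDist (fuzzyRiemannSum f D) A < ε

/-- `f` is fuzzy Henstock–Kurzweil Δ-integrable on `[a,b]_T`. -/
def FHKIntegrable (T : Set ℝ) (a b : ℝ) (f : ℝ → FuzzyNumber) : Prop :=
  ∃ A : FuzzyNumber, FHKIntegrableTo T a b f A

/-- The sequence `fₙ`, with FHK Δ-integrals `Aₙ`, is uniformly FHK Δ-integrable
on `[a,b]_T`: one Δ-gauge works for all `n` simultaneously. -/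
def UniformlyFHKIntegrableTo (T : Set ℝ) (a b : ℝ) (f : ℕ → ℝ → FuzzyNumber)
    (A : ℕ → FuzzyNumber) : Prop :=
  (∀ n, FHKIntegrableTo T a b (f n) (A n)) ∧
  ∀ ε > 0, ∃ δL δR : ℝ → ℝ, IsDeltaGauge T a b δL δR ∧
    ∀ D : TaggedDivision T a b, D.IsFine δL δR →
      ∀ n, fuzzyDist (fuzzyRiemannSum (f n) D) (A n) < ε

section AuxCauchy

private lemma fd_bdd (u v : FuzzyNumber) :
    BddAbove (Set.range fun α : unitInterval =>
      max |u.lo α - v.lo α| |u.hi α - v.hi α|) := by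
  refine ⟨(max |u.lo 0| |u.lo 1| + max |v.lo 0| |v.lo 1|) ⊔
          (max |u.hi 1| |u.hi 0| + max |v.hi 1| |v.hi 0|), ?_⟩
  rintro x ⟨α, rfl⟩
  have h01 : (0 : unitInterval) ≤ α := α.2.1
  have h11 : α ≤ (1 : unitInterval) := α.2.2
  apply max_le
  · refine le_sup_of_le_left ?_
    have h1 : |u.lo α| ≤ max |u.lo 0| |u.lo 1| :=
      abs_le_max_abs_abs (u.lo_mono h01) (u.lo_mono h11)
    have h2 : |v.lo α| ≤ max |v.lo 0| |v.lo 1| :=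
      abs_le_max_abs_abs (v.lo_mono h01) (v.lo_mono h11)
    have h3 : |u.lo α - v.lo α| ≤ |u.lo α| + |v.lo α| := by
      have := abs_add_le (u.lo α) (-(v.lo α))
      simpa [sub_eq_add_neg] using this
    linarith
  · refine le_sup_of_le_right ?_
    have h1 : |u.hi α| ≤ max |u.hi 1| |u.hi 0| :=
      abs_le_max_abs_abs (u.hi_anti h11) (u.hi_anti h01)
    have h2 : |v.hi α| ≤ max |v.hi 1| |v.hi 0| :=
      abs_le_max_abs_abs (v.hi_anti h11) (v.hi_anti h01)
    have h3 : |u.hi α - v.hi α| ≤ |u.hi α| + |v.hi α| := by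
      have := abs_add_le (u.hi α) (-(v.hi α))
      simpa [sub_eq_add_neg] using this
    linarith

private lemma abs_lo_le_fuzzyDist (u v : FuzzyNumber) (α : unitInterval) :
    |u.lo α - v.lo α| ≤ fuzzyDist u v :=
  le_trans (le_max_left _ _) (le_ciSup (fd_bdd u v) α)

private lemma abs_hi_le_fuzzyDist (u v : FuzzyNumber) (α : unitInterval) :
    |u.hi α - v.hi α| ≤ fuzzyDist u v :=
  le_trans (le_max_right _ _) (le_ciSup (fd_bdd u v) α)

private lemma fuzzyDist_triangle (u v w : FuzzyNumber) :
    fuzzyDist u w ≤ fuzzyDist u v + fuzzyDist v w := by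
  refine ciSup_le fun α => max_le ?_ ?_
  · calc |u.lo α - w.lo α| ≤ |u.lo α - v.lo α| + |v.lo α - w.lo α| := abs_sub_le _ _ _
      _ ≤ _ := add_le_add (abs_lo_le_fuzzyDist u v α) (abs_lo_le_fuzzyDist v w α)
  · calc |u.hi α - w.hi α| ≤ |u.hi α - v.hi α| + |v.hi α - w.hi α| := abs_sub_le _ _ _
      _ ≤ _ := add_le_add (abs_hi_le_fuzzyDist u v α) (abs_hi_le_fuzzyDist v w α)

private lemma fuzzyDist_comm (u v : FuzzyNumber) : fuzzyDist u v = fuzzyDist v u := by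
  unfold fuzzyDist
  congr 1
  funext α
  rw [abs_sub_comm (u.lo α), abs_sub_comm (u.hi α)]

/-- The uniform limit along a filter of one-sidedly continuous functions is
one-sidedly continuous. -/
private lemma tendsto_limit_of_unif {F : ℕ → unitInterval → ℝ} {g : unitInterval → ℝ}
    (hb : ∀ N : ℕ, ∀ α, |F N α - g α| ≤ 1 / (N + 1))
    (l : Filter unitInterval) (c : unitInterval)
    (hF : ∀ n, Tendsto (F n) l (𝓝 (F n c))) :
    Tendsto g l (𝓝 (g c)) := by
  rw [Metric.tendsto_nhds]
  intro ε hε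
  obtain ⟨N, hN⟩ := exists_nat_one_div_lt (show (0:ℝ) < ε / 3 by positivity)
  have h1 := (Metric.tendsto_nhds.mp (hF N)) (ε / 3) (by positivity)
  filter_upwards [h1] with α hα
  have b1 := hb N α
  have b2 := hb N c
  rw [Real.dist_eq] at hα ⊢
  have t1 : |g α - g c| ≤ |g α - F N α| + |F N α - g c| := abs_sub_le _ _ _
  have t2 : |F N α - g c| ≤ |F N α - F N c| + |F N c - g c| := abs_sub_le _ _ _
  have e1 : |g α - F N α| = |F N α - g α| := abs_sub_comm _ _
  linarith

/-- A "Cauchy" sequence of fuzzy numbers has a uniform limit. -/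
private lemma fuzzy_limit (S : ℕ → FuzzyNumber)
    (key : ∀ N n m : ℕ, N ≤ n → N ≤ m → fuzzyDist (S n) (S m) < 1 / (N + 1)) :
    ∃ A : FuzzyNumber, ∀ N n : ℕ, N ≤ n → ∀ α : unitInterval,
      |(S n).lo α - A.lo α| ≤ 1 / (N + 1) ∧ |(S n).hi α - A.hi α| ≤ 1 / (N + 1) := by
  have cauL : ∀ α : unitInterval, CauchySeq (fun n => (S n).lo α) := by
    intro α
    rw [Metric.cauchySeq_iff']
    intro ε hε
    obtain ⟨N, hN⟩ := exists_nat_one_div_lt hε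
    refine ⟨N, fun n hn => ?_⟩
    have h1 := key N n N hn le_rfl
    have h2 := abs_lo_le_fuzzyDist (S n) (S N) α
    rw [Real.dist_eq]
    linarith
  have cauH : ∀ α : unitInterval, CauchySeq (fun n => (S n).hi α) := by
    intro α
    rw [Metric.cauchySeq_iff']
    intro ε hε
    obtain ⟨N, hN⟩ := exists_nat_one_div_lt hε
    refine ⟨N, fun n hn => ?_⟩
    have h1 := key N n N hn le_rfl
    have h2 := abs_hi_le_fuzzyDist (S n) (S N) α
    rw [Real.dist_eq]
    linarith
  set Alo : unitInterval → ℝ := fun α => limUnder atTop (fun n => (S n).lo α) with hAlodef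
  set Ahi : unitInterval → ℝ := fun α => limUnder atTop (fun n => (S n).hi α) with hAhidef
  have hAlo : ∀ α, Tendsto (fun n => (S n).lo α) atTop (𝓝 (Alo α)) :=
    fun α => (cauL α).tendsto_limUnder
  have hAhi : ∀ α, Tendsto (fun n => (S n).hi α) atTop (𝓝 (Ahi α)) :=
    fun α => (cauH α).tendsto_limUnder
  have bndL : ∀ N n : ℕ, N ≤ n → ∀ α, |(S n).lo α - Alo α| ≤ 1 / (N + 1) := by
    intro N n hn α
    have h1 : Tendsto (fun m => |(S n).lo α - (S m).lo α|) atTop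
        (𝓝 |(S n).lo α - Alo α|) := (tendsto_const_nhds.sub (hAlo α)).abs
    refine le_of_tendsto h1 ?_
    filter_upwards [eventually_ge_atTop N] with m hm
    exact le_of_lt (lt_of_le_of_lt (abs_lo_le_fuzzyDist (S n) (S m) α) (key N n m hn hm))
  have bndH : ∀ N n : ℕ, N ≤ n → ∀ α, |(S n).hi α - Ahi α| ≤ 1 / (N + 1) := by
    intro N n hn α
    have h1 : Tendsto (fun m => |(S n).hi α - (S m).hi α|) atTop
        (𝓝 |(S n).hi α - Ahi α|) := (tendsto_const_nhds.sub (hAhi α)).abs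
    refine le_of_tendsto h1 ?_
    filter_upwards [eventually_ge_atTop N] with m hm
    exact le_of_lt (lt_of_le_of_lt (abs_hi_le_fuzzyDist (S n) (S m) α) (key N n m hn hm))
  refine ⟨⟨Alo, Ahi, ?_, ?_, ?_, ?_, ?_, ?_, ?_⟩, fun N n hn α => ⟨bndL N n hn α, bndH N n hn α⟩⟩
  · intro α β h
    exact le_of_tendsto_of_tendsto' (hAlo α) (hAlo β) fun n => (S n).lo_mono h
  · intro α β h
    exact le_of_tendsto_of_tendsto' (hAhi β) (hAhi α) fun n => (S n).hi_anti h
  · intro α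
    exact le_of_tendsto_of_tendsto' (hAlo α) (hAhi α) fun n => (S n).lo_le_hi α
  · intro c hc
    exact tendsto_limit_of_unif (fun N α => bndL N N le_rfl α) _ c
      (fun n => (S n).lo_leftCont c hc)
  · intro c hc
    exact tendsto_limit_of_unif (fun N α => bndH N N le_rfl α) _ c
      (fun n => (S n).hi_leftCont c hc)
  · exact tendsto_limit_of_unif (fun N α => bndL N N le_rfl α) _ 0
      (fun n => (S n).lo_rightCont)
  · exact tendsto_limit_of_unif (fun N α => bndH N N le_rfl α) _ 0
      (fun n => (S n).hi_rightCont)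

end AuxCauchy

/-- **Cauchy–Bolzano criterion for the FHK Δ-integral** (Theorem 3.3):
`f` is FHK Δ-integrable on `[a,b]_T` if and only if for every `ε > 0` there is a
Δ-gauge `δ` on `[a,b]_T` such that `D(S(f,D₁,δ), S(f,D₂,δ)) < ε` for all
`δ`-fine HK divisions `D₁, D₂` of `[a,b]_T`. -/
theorem fhk_delta_integrable_iff_cauchy
    (T : Set ℝ) (hTne : T.Nonempty) (hTcl : IsClosed T)
    (a b : ℝ) (ha : a ∈ T) (hb : b ∈ T) (hab : a < b)
    (f : ℝ → FuzzyNumber) :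
    FHKIntegrable T a b f ↔
      ∀ ε > 0, ∃ δL δR : ℝ → ℝ, IsDeltaGauge T a b δL δR ∧
        ∀ D₁ D₂ : TaggedDivision T a b, D₁.IsFine δL δR → D₂.IsFine δL δR →
          fuzzyDist (fuzzyRiemannSum f D₁) (fuzzyRiemannSum f D₂) < ε := by
  constructor
  · rintro ⟨A, hA⟩ ε hε
    obtain ⟨δL, δR, hg, h⟩ := hA (ε / 3) (by positivity)
    refine ⟨δL, δR, hg, fun D₁ D₂ h1 h2 => ?_⟩
    have t := fuzzyDist_triangle (fuzzyRiemannSum f D₁) A (fuzzyRiemannSum f D₂)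
    have hs : fuzzyDist A (fuzzyRiemannSum f D₂) = fuzzyDist (fuzzyRiemannSum f D₂) A :=
      fuzzyDist_comm _ _
    have hd1 := h D₁ h1
    have hd2 := h D₂ h2
    rw [hs] at t
    linarith
  · intro H
    choose δL δR hgauge hC using fun n : ℕ => H (1 / (n + 1)) (by positivity)
    -- the combined gauges
    set gL : ℕ → ℝ → ℝ := fun n ξ =>
      (Finset.range (n + 1)).inf' Finset.nonempty_range_add_one (fun i => δL i ξ) with hgLdef
    set gR : ℕ → ℝ → ℝ := fun n ξ =>
      (Finset.range (n + 1)).inf' Finset.nonempty_range_add_one (fun i => δR i ξ) with hgRdef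
    have hGgauge : ∀ n, IsDeltaGauge T a b (gL n) (gR n) := by
      intro n
      constructor
      · intro ξ hξ
        exact Finset.le_inf' _ _ fun i _ => (hgauge i).nonneg_left ξ hξ
      · intro ξ hξ
        exact Finset.le_inf' _ _ fun i _ => (hgauge i).nonneg_right ξ hξ
      · intro ξ hξ
        exact (Finset.lt_inf'_iff _).mpr fun i _ => (hgauge i).pos_left ξ hξ
      · intro ξ hξ
        exact (Finset.lt_inf'_iff _).mpr fun i _ => (hgauge i).pos_right ξ hξ
      · intro ξ hξ
        exact Finset.le_inf' _ _ fun i _ => (hgauge i).graininess_le ξ hξ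
    have hfine_mono : ∀ n i : ℕ, i ≤ n → ∀ D : TaggedDivision T a b,
        D.IsFine (gL n) (gR n) → D.IsFine (δL i) (δR i) := by
      intro n i hi D hD j hj
      obtain ⟨h1, h2⟩ := hD j hj
      have hmem : i ∈ Finset.range (n + 1) := Finset.mem_range.mpr (Nat.lt_succ_of_le hi)
      have hL : gL n (D.tag j) ≤ δL i (D.tag j) := Finset.inf'_le _ hmem
      have hR : gR n (D.tag j) ≤ δR i (D.tag j) := Finset.inf'_le _ hmem
      exact ⟨by linarith, by linarith⟩
    by_cases hex : ∀ n : ℕ, ∃ D : TaggedDivision T a b, D.IsFine (gL n) (gR n)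
    · -- every combined gauge admits a fine division
      choose Dd hDd using hex
      set S : ℕ → FuzzyNumber := fun n => fuzzyRiemannSum f (Dd n) with hSdef
      have key : ∀ N n m : ℕ, N ≤ n → N ≤ m → fuzzyDist (S n) (S m) < 1 / (N + 1) := by
        intro N n m hn hm
        exact hC N _ _ (hfine_mono n N hn _ (hDd n)) (hfine_mono m N hm _ (hDd m))
      obtain ⟨A, hA⟩ := fuzzy_limit S key
      refine ⟨A, fun ε hε => ?_⟩
      obtain ⟨N, hN⟩ := exists_nat_one_div_lt (show (0:ℝ) < ε / 2 by positivity)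
      refine ⟨gL N, gR N, hGgauge N, fun D hD => ?_⟩
      have hDfine : D.IsFine (δL N) (δR N) := hfine_mono N N le_rfl D hD
      have hDNfine : (Dd N).IsFine (δL N) (δR N) := hfine_mono N N le_rfl _ (hDd N)
      have hclose : fuzzyDist (fuzzyRiemannSum f D) (S N) < 1 / (N + 1) :=
        hC N _ _ hDfine hDNfine
      have hsum : fuzzyDist (fuzzyRiemannSum f D) A ≤ 2 / (N + 1) := by
        refine ciSup_le fun α => max_le ?_ ?_
        · have t1 : |(fuzzyRiemannSum f D).lo α - (S N).lo α| ≤ fuzzyDist (fuzzyRiemannSum f D) (S N) :=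
            abs_lo_le_fuzzyDist _ _ α
          have t2 := (hA N N le_rfl α).1
          have t3 : |(fuzzyRiemannSum f D).lo α - A.lo α| ≤
              |(fuzzyRiemannSum f D).lo α - (S N).lo α| + |(S N).lo α - A.lo α| :=
            abs_sub_le _ _ _
          have : (2:ℝ) / (N + 1) = 1 / (N + 1) + 1 / (N + 1) := by ring
          rw [this]
          linarith
        · have t1 : |(fuzzyRiemannSum f D).hi α - (S N).hi α| ≤ fuzzyDist (fuzzyRiemannSum f D) (S N) :=
            abs_hi_le_fuzzyDist _ _ α
          have t2 := (hA N N le_rfl α).2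
          have t3 : |(fuzzyRiemannSum f D).hi α - A.hi α| ≤
              |(fuzzyRiemannSum f D).hi α - (S N).hi α| + |(S N).hi α - A.hi α| :=
            abs_sub_le _ _ _
          have : (2:ℝ) / (N + 1) = 1 / (N + 1) + 1 / (N + 1) := by ring
          rw [this]
          linarith
      have : (2:ℝ) / (N + 1) < ε := by
        have : (2:ℝ) / (N + 1) = 2 * (1 / (N + 1)) := by ring
        rw [this]
        linarith
      linarith
    · -- some combined gauge admits no fine division: vacuous integrability
      push_neg at hex
      obtain ⟨n, hn⟩ := hex
      refine ⟨0, fun ε hε => ⟨gL n, gR n, hGgauge n, fun D hD => absurd hD (hn D)⟩⟩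

end
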